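/- There exists a function h ∈ BMO(ℝ²) (i.e. locally integrable with ‖h‖_{BMO(ℝ²)} < ∞) such that for every y ∈ ℝ, the horizontal slice h_y(t) = h(t,y) satisfies sup{ O(h_y, I) : I a closed interval of length 2 } = ∞; in particular no horizontal slice of h belongs to BMO(ℝ). -/

import Mathlib

open MeasureTheory Set Filter
open scoped ENNReal Topology

/-- Mean oscillation of `f : ℝ → ℝ` over `A ⊆ ℝ`. -/
noncomputable def osc1 (f : ℝ → ℝ) (A : Set ℝ) : ℝ :=
  ⨍ x in A, |f x - ⨍ y in A, f y|

/-- BMO(ℝ) seminorm. -/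
noncomputable def bmo1 (f : ℝ → ℝ) : ℝ≥0∞ :=
  ⨆ (a : ℝ) (b : ℝ) (_ : a < b), ENNReal.ofReal (osc1 f (Icc a b))

/-- Mean oscillation of `f : ℝ × ℝ → ℝ` over `E ⊆ ℝ²`. -/
noncomputable def osc2 (f : ℝ × ℝ → ℝ) (E : Set (ℝ × ℝ)) : ℝ :=
  ⨍ p in E, |f p - ⨍ q in E, f q|

/-- BMO(ℝ²) seminorm: supremum over closed axis-parallel squares of positive side length. -/
noncomputable def bmo2 (f : ℝ × ℝ → ℝ) : ℝ≥0∞ :=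
  ⨆ (a : ℝ) (b : ℝ) (l : ℝ) (_ : 0 < l),
    ENNReal.ofReal (osc2 f (Icc a (a + l) ×ˢ Icc b (b + l)))

/-!
Place a horizontal slit `[3n, 3n + 1] × {q n}` at every rational height `q n` (`n : ℤ`) and let
`h = log⁺ (1 / dist (·, slits))` (the metric on `ℝ × ℝ` is the sup metric). Slits are separated
horizontally by gaps of length `2`, so along each vertical line only one slit matters and
`h (x, ·) ≤ log⁺ (1 / |· - q n|)` there.

BMO: on a square of side `l` with corner `z`, the distance to the slits varies by at most `l`, which
gives `|h - log⁺ (1 / max l (dist (z, slits)))| ≤ log 2 + log⁺ (min l 1 / dist (·, slits))`; by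
Fubini the right-hand side has integral `O(l²)` over the square.

Slices: on the line at height `y`, the interval `[3n, 3n + 2]` sees `h = log⁺ (1 / |y - q n|)` on
its left half and a singularity of integral at most `2` on its right half. Since rational heights
accumulate at `y`, these oscillations are unbounded.
-/

open Real Metric

section Oscillation

variable {α : Type*} [MeasurableSpace α] {μ : Measure α} {f : α → ℝ} {s : Set α}

theorem setIntegral_abs_sub_setAverage_le (hs : μ s ≠ ⊤) (hf : IntegrableOn f s μ) (c : ℝ) :
    ∫ x in s, |f x - ⨍ y in s, f y ∂μ| ∂μ ≤ 2 * ∫ x in s, |f x - c| ∂μ := by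
  set m := ⨍ y in s, f y ∂μ
  have hc : IntegrableOn (fun _ => c) s μ := integrableOn_const hs
  have hfc : IntegrableOn (fun x => |f x - c|) s μ := (hf.sub hc).abs
  have hmc : μ.real s * |m - c| ≤ ∫ x in s, |f x - c| ∂μ := by
    have hint : μ.real s * (m - c) = ∫ x in s, (f x - c) ∂μ := by
      rw [integral_sub hf hc, ← measure_smul_setAverage f hs, setIntegral_const, smul_eq_mul,
        smul_eq_mul, mul_sub]
    calc μ.real s * |m - c| = |∫ x in s, (f x - c) ∂μ| := by
          rw [← hint, abs_mul, abs_of_nonneg measureReal_nonneg]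
      _ ≤ ∫ x in s, |f x - c| ∂μ := abs_integral_le_integral_abs
  calc ∫ x in s, |f x - m| ∂μ ≤ ∫ x in s, (|f x - c| + |m - c|) ∂μ :=
        integral_mono_of_nonneg (.of_forall fun _ => abs_nonneg _) (hfc.add (integrableOn_const hs))
          (.of_forall fun x => by simpa [abs_sub_comm m c] using abs_sub_le (f x) c m)
    _ = ∫ x in s, |f x - c| ∂μ + μ.real s * |m - c| := by
        rw [integral_add hfc (integrableOn_const hs), setIntegral_const, smul_eq_mul]
    _ ≤ 2 * ∫ x in s, |f x - c| ∂μ := by linarith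

theorem setAverage_abs_sub_setAverage_le (hs : μ s ≠ ⊤) (hf : IntegrableOn f s μ) (c : ℝ) :
    ⨍ x in s, |f x - ⨍ y in s, f y ∂μ| ∂μ ≤ 2 * ⨍ x in s, |f x - c| ∂μ := by
  rw [setAverage_eq μ (fun x => |f x - ⨍ y in s, f y ∂μ|), setAverage_eq μ (fun x => |f x - c|),
    smul_eq_mul, smul_eq_mul, mul_left_comm]
  exact mul_le_mul_of_nonneg_left (setIntegral_abs_sub_setAverage_le hs hf c)
    (inv_nonneg.mpr measureReal_nonneg)

theorem setIntegral_sub_setIntegral_le_setIntegral_abs_sub {A B : Set α} (hA : A ⊆ s)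
    (hB : B ⊆ s) (hAB : Disjoint A B) (hBm : MeasurableSet B) (hμ : μ A = μ B) (hs : μ s ≠ ⊤)
    (hf : IntegrableOn f s μ) (m : ℝ) :
    ∫ x in A, f x ∂μ - ∫ x in B, f x ∂μ ≤ ∫ x in s, |f x - m| ∂μ := by
  have hfA := hf.mono_set hA
  have hfB := hf.mono_set hB
  have hmA : IntegrableOn (fun _ => m) A μ := integrableOn_const (measure_ne_top_of_subset hA hs)
  have hmB : IntegrableOn (fun _ => m) B μ := integrableOn_const (measure_ne_top_of_subset hB hs)
  have hfm : IntegrableOn (fun x => |f x - m|) s μ := (hf.sub (integrableOn_const hs)).abs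
  calc ∫ x in A, f x ∂μ - ∫ x in B, f x ∂μ
      = ∫ x in A, (f x - m) ∂μ + ∫ x in B, (m - f x) ∂μ := by
        rw [integral_sub hfA hmA, integral_sub hmB hfB, setIntegral_const, setIntegral_const,
          measureReal_def, measureReal_def, hμ]
        ring
    _ ≤ ∫ x in A, |f x - m| ∂μ + ∫ x in B, |f x - m| ∂μ :=
        add_le_add (integral_mono (hfA.sub hmA) (hfm.mono_set hA) fun x => le_abs_self _)
          (integral_mono (hmB.sub hfB) (hfm.mono_set hB) fun x => neg_sub (f x) m ▸ neg_le_abs _)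
    _ = ∫ x in A ∪ B, |f x - m| ∂μ :=
        (setIntegral_union hAB hBm (hfm.mono_set hA) (hfm.mono_set hB)).symm
    _ ≤ ∫ x in s, |f x - m| ∂μ :=
        setIntegral_mono_set hfm (.of_forall fun _ => abs_nonneg _)
          (union_subset hA hB).eventuallyLE

end Oscillation

theorem bmo2_ne_top_of_osc2_le {f : ℝ × ℝ → ℝ} {K : ℝ}
    (h : ∀ a b l, 0 < l → osc2 f (Icc a (a + l) ×ˢ Icc b (b + l)) ≤ K) : bmo2 f ≠ ⊤ :=
  ne_top_of_le_ne_top ENNReal.ofReal_ne_top <| iSup_le fun a => iSup_le fun b => iSup_le fun l =>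
    iSup_le fun hl => ENNReal.ofReal_le_ofReal (h a b l hl)

theorem bmo1_eq_top_of_forall_exists_lt {f : ℝ → ℝ}
    (h : ∀ C : ℝ, ∃ a b, a < b ∧ C < osc1 f (Icc a b)) : bmo1 f = ⊤ := by
  refine ENNReal.eq_top_of_forall_nnreal_le fun r => ?_
  obtain ⟨a, b, hab, hC⟩ := h r
  calc (r : ℝ≥0∞) = ENNReal.ofReal r := ENNReal.ofReal_coe_nnreal.symm
    _ ≤ ENNReal.ofReal (osc1 f (Icc a b)) := ENNReal.ofReal_le_ofReal hC.le
    _ ≤ bmo1 f := le_iSup_of_le a <| le_iSup_of_le b <| le_iSup_of_le hab le_rfl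

section Fubini

variable {α β : Type*} [MeasurableSpace α] [MeasurableSpace β] {μ : Measure α} {ν : Measure β}
  [SFinite μ] [SFinite ν] {s : Set α} {t : Set β}

theorem setLIntegral_prod_le_mul {f : α × β → ℝ≥0∞} {K : ℝ≥0∞}
    (hK : ∀ x, ∫⁻ y, f (x, y) ∂ν ≤ K) : ∫⁻ p in s ×ˢ t, f p ∂μ.prod ν ≤ K * μ s := by
  rw [← Measure.prod_restrict]
  calc ∫⁻ p, f p ∂(μ.restrict s).prod (ν.restrict t)
      ≤ ∫⁻ x in s, ∫⁻ y in t, f (x, y) ∂ν ∂μ := lintegral_prod_le f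
    _ ≤ ∫⁻ _ in s, K ∂μ := lintegral_mono fun x => (setLIntegral_le_lintegral t _).trans (hK x)
    _ = K * μ s := setLIntegral_const s K

variable {g : α × β → ℝ} {K : ℝ}

theorem integrableOn_prod_of_lintegral_le (hg : AEStronglyMeasurable g (μ.prod ν)) (hg0 : 0 ≤ g)
    (hK : ∀ x, ∫⁻ y, ENNReal.ofReal (g (x, y)) ∂ν ≤ ENNReal.ofReal K) (hs : μ s ≠ ⊤) :
    IntegrableOn g (s ×ˢ t) (μ.prod ν) := by
  refine ⟨hg.restrict, (hasFiniteIntegral_iff_ofReal (.of_forall hg0)).mpr ?_⟩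
  exact (setLIntegral_prod_le_mul hK).trans_lt (ENNReal.mul_lt_top ENNReal.ofReal_lt_top hs.lt_top)

theorem setIntegral_prod_le_of_lintegral_le (hg : AEStronglyMeasurable g (μ.prod ν)) (hg0 : 0 ≤ g)
    (hK0 : 0 ≤ K) (hK : ∀ x, ∫⁻ y, ENNReal.ofReal (g (x, y)) ∂ν ≤ ENNReal.ofReal K)
    (hs : μ s ≠ ⊤) : ∫ p in s ×ˢ t, g p ∂μ.prod ν ≤ K * μ.real s := by
  rw [integral_eq_lintegral_of_nonneg_ae (.of_forall hg0) hg.restrict]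
  refine ENNReal.toReal_le_of_le_ofReal (by positivity) ?_
  rw [ENNReal.ofReal_mul hK0, measureReal_def, ENNReal.ofReal_toReal hs]
  exact setLIntegral_prod_le_mul hK

end Fubini

theorem posLog_inv_eq_neg_log {y : ℝ} (hy : |y| ≤ 1) : log⁺ y⁻¹ = -log y := by
  rw [posLog_apply, log_inv,
    max_eq_right (neg_nonneg.mpr (log_abs y ▸ log_nonpos (abs_nonneg y) hy))]

theorem posLog_inv_eq_zero {y : ℝ} (hy : 1 ≤ |y|) : log⁺ y⁻¹ = 0 := by
  rw [posLog_eq_zero_iff, abs_inv]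
  exact inv_le_one_of_one_le₀ hy

theorem posLog_inv_eq_zero_of_notMem_Icc {y : ℝ} (hy : y ∉ Icc (-1) 1) : log⁺ y⁻¹ = 0 := by
  rw [mem_Icc, not_and_or, not_le, not_le] at hy
  exact posLog_inv_eq_zero (le_abs'.mpr (hy.imp le_of_lt le_of_lt))

theorem eqOn_posLog_inv_neg_log : EqOn (fun y : ℝ => log⁺ y⁻¹) (fun y => -log y) (Icc (-1) 1) :=
  fun _ hy => posLog_inv_eq_neg_log (abs_le.mpr hy)

theorem integrable_posLog_inv : Integrable (fun y : ℝ => log⁺ y⁻¹) := by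
  refine (integrableOn_iff_integrable_of_support_subset (s := Icc (-1) 1) fun y hy => ?_).mp ?_
  · by_contra h
    exact hy (posLog_inv_eq_zero_of_notMem_Icc h)
  · have : IntegrableOn (fun y => -log y) (Icc (-1 : ℝ) 1) :=
      (intervalIntegrable_iff_integrableOn_Icc_of_le (by norm_num)).mp
        (intervalIntegral.intervalIntegrable_log' (a := -1) (b := 1)).neg
    exact this.congr_fun eqOn_posLog_inv_neg_log.symm measurableSet_Icc

theorem integral_posLog_inv : ∫ y : ℝ, log⁺ y⁻¹ = 2 := by
  rw [← setIntegral_eq_integral_of_forall_compl_eq_zero fun y => posLog_inv_eq_zero_of_notMem_Icc,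
    setIntegral_congr_fun measurableSet_Icc eqOn_posLog_inv_neg_log, integral_Icc_eq_integral_Ioc,
    ← intervalIntegral.integral_of_le (by norm_num), intervalIntegral.integral_neg, integral_log]
  norm_num

theorem integrable_posLog_div_abs_sub (c : ℝ) {l : ℝ} (hl : 0 < l) :
    Integrable (fun y : ℝ => log⁺ (l / |y - c|)) := by
  refine ((integrable_posLog_inv.comp_div hl.ne').comp_sub_right c).congr (.of_forall fun y => ?_)
  dsimp only
  rw [inv_div, ← posLog_abs (l / (y - c)), abs_div, abs_of_pos hl]

theorem integral_posLog_div_abs_sub (c : ℝ) {l : ℝ} (hl : 0 < l) :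
    ∫ y : ℝ, log⁺ (l / |y - c|) = 2 * l := by
  have : ∀ y : ℝ, log⁺ (l / |y - c|) = log⁺ ((y - c) / l)⁻¹ := fun y => by
    rw [inv_div, ← posLog_abs (l / (y - c)), abs_div, abs_of_pos hl]
  simp_rw [this]
  rw [integral_sub_right_eq_self (fun y => log⁺ (y / l)⁻¹) c, Measure.integral_comp_div
    (fun y => log⁺ y⁻¹), integral_posLog_inv, abs_of_pos hl, smul_eq_mul, mul_comm]

theorem posLog_div_le_posLog_div_of_min_le {l d e : ℝ} (hl : 0 < l) (he : 0 < e)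
    (h : min l e ≤ d) : log⁺ (l / d) ≤ log⁺ (l / e) := by
  rcases le_total l e with hle | hle
  · rw [min_eq_left hle] at h
    rw [(posLog_eq_zero_iff _).mpr]
    · exact posLog_nonneg
    · rw [abs_div, abs_of_pos hl, abs_of_pos (hl.trans_le h)]
      exact div_le_one_of_le₀ h (hl.trans_le h).le
  · rw [min_eq_right hle] at h
    exact posLog_le_posLog (div_nonneg hl.le (he.trans_le h).le)
      (div_le_div_of_nonneg_left hl.le he h)

theorem posLog_one_div_eq_of_min_one_le_of_le {d e : ℝ} (h₁ : min 1 e ≤ d) (h₂ : d ≤ e) :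
    log⁺ (1 / d) = log⁺ (1 / e) := by
  rcases le_total e 1 with he | he
  · rw [le_antisymm h₂ (min_eq_right he ▸ h₁)]
  · have hd : 1 ≤ d := min_eq_left he ▸ h₁
    rw [(posLog_eq_zero_iff _).mpr, (posLog_eq_zero_iff _).mpr] <;>
      rw [abs_of_nonneg (by positivity)] <;> [exact div_le_one_of_le₀ he (by linarith);
        exact div_le_one_of_le₀ hd (by linarith)]

theorem abs_posLog_one_div_sub_le {u v l : ℝ} (hl : 0 < l) (hu : 0 < u) (huv : |u - v| ≤ l) :
    |log⁺ (1 / u) - log⁺ (1 / max l v)| ≤ log 2 + log⁺ (min l 1 / u) := by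
  have hlog2 : 0 ≤ log 2 := log_nonneg one_le_two
  rcases le_total 1 l with h1 | h1
  · rw [(posLog_eq_zero_iff (1 / max l v)).mpr, sub_zero, abs_of_nonneg posLog_nonneg,
      min_eq_right h1]
    · linarith
    · rw [abs_of_nonneg (by positivity)]
      exact div_le_one_of_le₀ (h1.trans (le_max_left l v)) (by positivity)
  set M := max l v
  have hlM : l ≤ M := le_max_left l v
  have hvM : v ≤ M := le_max_right l v
  have hM : 0 < M := hl.trans_le hlM
  -- `log⁺ (1 / x) = max 0 (-log x)` is 1-Lipschitz in `log x`
  have hlip : |log⁺ (1 / u) - log⁺ (1 / M)| ≤ |log M - log u| := by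
    simp only [posLog_apply, one_div, log_inv, max_comm (0 : ℝ)]
    exact (abs_max_sub_max_le_abs _ _ _).trans_eq (congrArg _ (by ring))
  have hupper : log u - log M ≤ log 2 := by
    rw [← log_div hu.ne' hM.ne']
    refine log_le_log (div_pos hu hM) ((div_le_iff₀ hM).mpr ?_)
    linarith [(abs_le.mp huv).2]
  have hlower : log M - log u ≤ log 2 + log⁺ (l / u) := by
    rw [posLog_eq_log_max_one (by positivity), ← log_mul two_ne_zero (by positivity),
      ← log_div hM.ne' hu.ne']
    refine log_le_log (div_pos hM hu) ((div_le_iff₀ hu).mpr ?_)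
    rw [mul_assoc, max_mul_of_nonneg _ _ hu.le, one_mul, div_mul_cancel₀ l hu.ne']
    exact max_le (by linarith [le_max_right u l])
      (by linarith [(abs_le.mp huv).1, le_max_left u l, le_max_right u l])
  rw [min_eq_left h1]
  exact hlip.trans (abs_le.mpr ⟨by linarith [posLog_nonneg (x := l / u)], hlower⟩)

noncomputable def slitHeight (n : ℤ) : ℝ := (Denumerable.equiv₂ ℤ ℚ n : ℝ)

def slit (n : ℤ) : Set (ℝ × ℝ) := Icc (3 * n : ℝ) (3 * n + 1) ×ˢ {slitHeight n}

def slits : Set (ℝ × ℝ) := ⋃ n, slit n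

noncomputable def logInvDistSlits (p : ℝ × ℝ) : ℝ := log⁺ (1 / infDist p slits)

theorem exists_slitHeight_eq (q : ℚ) : ∃ n, slitHeight n = q :=
  ⟨(Denumerable.equiv₂ ℤ ℚ).symm q, by simp [slitHeight]⟩

theorem mk_mem_slit {n : ℤ} {t : ℝ} (ht : t ∈ Icc (3 * n : ℝ) (3 * n + 1)) :
    (t, slitHeight n) ∈ slit n :=
  ⟨ht, rfl⟩

theorem slit_nonempty (n : ℤ) : (slit n).Nonempty :=
  ⟨_, mk_mem_slit (left_mem_Icc.mpr (by linarith))⟩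

theorem slits_nonempty : slits.Nonempty :=
  (slit_nonempty 0).mono (subset_iUnion slit 0)

theorem abs_sub_slitHeight_le_infDist_slit (n : ℤ) (p : ℝ × ℝ) :
    |p.2 - slitHeight n| ≤ infDist p (slit n) := by
  refine (le_infDist (slit_nonempty n)).mpr fun q hq => ?_
  rw [Prod.dist_eq, Real.dist_eq, show q.2 = slitHeight n from hq.2]
  exact le_max_right _ _

theorem sub_le_infDist_slit (n : ℤ) (p : ℝ × ℝ) : p.1 - (3 * n + 1) ≤ infDist p (slit n) := by
  refine (le_infDist (slit_nonempty n)).mpr fun q hq => ?_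
  rw [Prod.dist_eq, Real.dist_eq]
  linarith [hq.1.2, le_abs_self (p.1 - q.1), le_max_left |p.1 - q.1| (dist p.2 q.2)]

/-- Every other slit lies at horizontal distance at least `1`. -/
theorem min_one_infDist_slit_le {n : ℤ} {p : ℝ × ℝ} (h₁ : 3 * n - 1 ≤ p.1) (h₂ : p.1 ≤ 3 * n + 2) :
    min 1 (infDist p (slit n)) ≤ infDist p slits := by
  refine (le_infDist slits_nonempty).mpr fun q hq => ?_
  obtain ⟨m, hm⟩ := mem_iUnion.mp hq
  rcases eq_or_ne m n with rfl | hmn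
  · exact (min_le_right _ _).trans (infDist_le_dist_of_mem hm)
  refine (min_le_left _ _).trans ((le_abs'.mpr ?_).trans (le_max_left _ (dist p.2 q.2)))
  obtain ⟨⟨hq₁, hq₂⟩, -⟩ := hm
  rcases hmn.lt_or_gt with hlt | hlt
  · have : (m : ℝ) + 1 ≤ n := by exact_mod_cast hlt
    right; linarith
  · have : (n : ℝ) + 1 ≤ m := by exact_mod_cast hlt
    left; linarith

theorem exists_min_one_abs_sub_slitHeight_le (x : ℝ) :
    ∃ n, ∀ y, min 1 |y - slitHeight n| ≤ infDist (x, y) slits := by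
  refine ⟨⌊(x + 1) / 3⌋, fun y => ?_⟩
  have h₁ := Int.floor_le ((x + 1) / 3)
  have h₂ := Int.lt_floor_add_one ((x + 1) / 3)
  exact (min_le_min_left 1 (abs_sub_slitHeight_le_infDist_slit _ (x, y))).trans
    (min_one_infDist_slit_le (by dsimp; linarith) (by dsimp; linarith))

theorem infDist_slits_le {n : ℤ} {t : ℝ} (ht : t ∈ Icc (3 * n : ℝ) (3 * n + 1)) (y : ℝ) :
    infDist (t, y) slits ≤ |y - slitHeight n| := by
  refine (infDist_le_dist_of_mem (subset_iUnion slit n (mk_mem_slit ht))).trans_eq ?_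
  simp [Prod.dist_eq, Real.dist_eq]

theorem ae_infDist_slits_pos : ∀ᵐ p : ℝ × ℝ, 0 < infDist p slits := by
  have hlines : ∀ᵐ p : ℝ × ℝ, ∀ n, p.2 ≠ slitHeight n := by
    refine ae_all_iff.mpr fun n => ?_
    rw [Measure.volume_eq_prod]
    exact Measure.quasiMeasurePreserving_snd.ae (measure_eq_zero_iff_ae_notMem.mp
      (measure_singleton (slitHeight n)))
  filter_upwards [hlines] with p hp
  obtain ⟨n, hn⟩ := exists_min_one_abs_sub_slitHeight_le p.1
  exact (lt_min one_pos (abs_pos.mpr (sub_ne_zero.mpr (hp n)))).trans_le (hn p.2)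

section SquareEstimates

theorem measurable_posLog_div_infDist_slits (l : ℝ) :
    Measurable fun p : ℝ × ℝ => log⁺ (l / infDist p slits) :=
  continuous_posLog.measurable.comp (measurable_const.div (continuous_infDist_pt slits).measurable)

theorem lintegral_posLog_div_infDist_slits_le (x : ℝ) {l : ℝ} (hl : 0 < l) (hl₁ : l ≤ 1) :
    ∫⁻ y, ENNReal.ofReal (log⁺ (l / infDist (x, y) slits)) ≤ ENNReal.ofReal (2 * l) := by
  obtain ⟨n, hn⟩ := exists_min_one_abs_sub_slitHeight_le x
  calc ∫⁻ y, ENNReal.ofReal (log⁺ (l / infDist (x, y) slits))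
      ≤ ∫⁻ y, ENNReal.ofReal (log⁺ (l / |y - slitHeight n|)) := by
        refine lintegral_mono_ae ?_
        filter_upwards [measure_eq_zero_iff_ae_notMem.mp (measure_singleton (slitHeight n))]
          with y hy
        exact ENNReal.ofReal_le_ofReal (posLog_div_le_posLog_div_of_min_le hl
          (abs_pos.mpr (sub_ne_zero.mpr hy)) ((min_le_min_right _ hl₁).trans (hn y)))
    _ = ENNReal.ofReal (2 * l) := by
        rw [← ofReal_integral_eq_lintegral_ofReal (integrable_posLog_div_abs_sub _ hl)
          (.of_forall fun _ => posLog_nonneg), integral_posLog_div_abs_sub _ hl]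

variable {l : ℝ} {s t : Set ℝ}

theorem integrableOn_posLog_div_infDist_slits (hl : 0 < l) (hl₁ : l ≤ 1) (hs : volume s ≠ ⊤) :
    IntegrableOn (fun p => log⁺ (l / infDist p slits)) (s ×ˢ t) := by
  rw [Measure.volume_eq_prod]
  exact integrableOn_prod_of_lintegral_le
    (measurable_posLog_div_infDist_slits l).aestronglyMeasurable (fun _ => posLog_nonneg) (lintegral_posLog_div_infDist_slits_le · hl hl₁) hs

theorem setIntegral_posLog_div_infDist_slits_le (hl : 0 < l) (hl₁ : l ≤ 1) (hs : volume s ≠ ⊤) :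
    ∫ p in s ×ˢ t, log⁺ (l / infDist p slits) ≤ 2 * l * volume.real s := by
  rw [Measure.volume_eq_prod]
  exact setIntegral_prod_le_of_lintegral_le
    (measurable_posLog_div_infDist_slits l).aestronglyMeasurable (fun _ => posLog_nonneg)
    (by positivity) (lintegral_posLog_div_infDist_slits_le · hl hl₁) hs

theorem integrableOn_logInvDistSlits (hs : volume s ≠ ⊤) :
    IntegrableOn logInvDistSlits (s ×ˢ t) :=
  integrableOn_posLog_div_infDist_slits one_pos le_rfl hs

theorem locallyIntegrable_logInvDistSlits : LocallyIntegrable logInvDistSlits :=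
  (locallyIntegrable_iff).mpr fun _ hK => (integrableOn_logInvDistSlits
    (hK.image continuous_fst).measure_lt_top.ne).mono_set subset_fst_image_prod_snd_image

theorem abs_logInvDistSlits_sub_le {a b : ℝ} (hl : 0 < l) {p : ℝ × ℝ}
    (hp : p ∈ Icc a (a + l) ×ˢ Icc b (b + l)) (hpos : 0 < infDist p slits) :
    |logInvDistSlits p - log⁺ (1 / max l (infDist (a, b) slits))| ≤
      log 2 + log⁺ (min l 1 / infDist p slits) := by
  refine abs_posLog_one_div_sub_le hl hpos ?_
  have hdist : dist p (a, b) ≤ l := by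
    obtain ⟨⟨h₁, h₂⟩, h₃, h₄⟩ := hp
    rw [Prod.dist_eq, Real.dist_eq, Real.dist_eq]
    exact max_le (abs_le.mpr ⟨by linarith, by linarith⟩) (abs_le.mpr ⟨by linarith, by linarith⟩)
  have h₁ := infDist_le_infDist_add_dist (s := slits) (x := p) (y := (a, b))
  have h₂ := infDist_le_infDist_add_dist (s := slits) (x := (a, b)) (y := p)
  rw [dist_comm] at h₂
  exact abs_sub_le_iff.mpr ⟨by linarith, by linarith⟩

theorem setAverage_abs_logInvDistSlits_sub_le (a b : ℝ) (hl : 0 < l) :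
    ⨍ p in Icc a (a + l) ×ˢ Icc b (b + l),
      |logInvDistSlits p - log⁺ (1 / max l (infDist (a, b) slits))| ≤ log 2 + 2 := by
  set Q := Icc a (a + l) ×ˢ Icc b (b + l)
  set l' := min l 1
  have hvol : volume.real Q = l * l := by
    rw [Measure.volume_eq_prod, measureReal_prod_prod, Real.volume_real_Icc_of_le (by linarith),
      Real.volume_real_Icc_of_le (by linarith), add_sub_cancel_left, add_sub_cancel_left]
  have hconst : IntegrableOn (fun _ => log 2) Q :=
    integrableOn_const (isCompact_Icc.prod isCompact_Icc).measure_lt_top.ne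
  have hpart : IntegrableOn (fun p => log⁺ (l' / infDist p slits)) Q :=
    integrableOn_posLog_div_infDist_slits (lt_min hl one_pos) (min_le_right _ _)
      measure_Icc_lt_top.ne
  have hpart_le : ∫ p in Q, log⁺ (l' / infDist p slits) ≤ 2 * l' * l := by
    have := setIntegral_posLog_div_infDist_slits_le (lt_min hl one_pos) (min_le_right _ _)
      (measure_Icc_lt_top (a := a) (b := a + l)).ne (t := Icc b (b + l))
    rwa [Real.volume_real_Icc_of_le (by linarith), add_sub_cancel_left] at this
  have hpt : ∀ᵐ p ∂volume.restrict Q, |logInvDistSlits p - log⁺ (1 / max l (infDist (a, b) slits))|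
      ≤ log 2 + log⁺ (l' / infDist p slits) := by
    filter_upwards [ae_restrict_mem (measurableSet_Icc.prod measurableSet_Icc),
      ae_restrict_of_ae ae_infDist_slits_pos] with p hp hpos
    exact abs_logInvDistSlits_sub_le hl hp hpos
  have hint : ∫ p in Q, |logInvDistSlits p - log⁺ (1 / max l (infDist (a, b) slits))| ≤
      (log 2 + 2) * (l * l) :=
    calc _ ≤ ∫ p in Q, (log 2 + log⁺ (l' / infDist p slits)) :=
          integral_mono_of_nonneg (.of_forall fun _ => abs_nonneg _) (hconst.add hpart) hpt
      _ = l * l * log 2 + ∫ p in Q, log⁺ (l' / infDist p slits) := by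
          rw [integral_add hconst hpart, setIntegral_const, hvol, smul_eq_mul]
      _ ≤ (log 2 + 2) * (l * l) := by nlinarith [min_le_left l 1]
  rw [setAverage_eq, hvol, smul_eq_mul, inv_mul_le_iff₀ (by positivity)]
  linarith

theorem osc2_logInvDistSlits_le (a b : ℝ) (hl : 0 < l) :
    osc2 logInvDistSlits (Icc a (a + l) ×ˢ Icc b (b + l)) ≤ 2 * (log 2 + 2) :=
  (setAverage_abs_sub_setAverage_le (isCompact_Icc.prod isCompact_Icc).measure_lt_top.ne
    (integrableOn_logInvDistSlits measure_Icc_lt_top.ne) _).trans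
    (mul_le_mul_of_nonneg_left (setAverage_abs_logInvDistSlits_sub_le a b hl) zero_le_two)

end SquareEstimates

theorem logInvDistSlits_eq_of_mem_Icc {n : ℤ} {t : ℝ} (ht : t ∈ Icc (3 * n : ℝ) (3 * n + 1))
    (y : ℝ) : logInvDistSlits (t, y) = log⁺ (1 / |y - slitHeight n|) :=
  posLog_one_div_eq_of_min_one_le_of_le
    ((min_le_min_left 1 (abs_sub_slitHeight_le_infDist_slit n (t, y))).trans
      (min_one_infDist_slit_le (by dsimp; linarith [ht.1]) (by dsimp; linarith [ht.2])))
    (infDist_slits_le ht y)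

theorem logInvDistSlits_le_of_mem_Ioc {n : ℤ} {t : ℝ} (ht : t ∈ Ioc (3 * n + 1 : ℝ) (3 * n + 2))
    (y : ℝ) : logInvDistSlits (t, y) ≤ log⁺ (1 / |t - (3 * n + 1)|) := by
  have hpos : 0 < t - (3 * n + 1) := sub_pos.mpr ht.1
  rw [abs_of_pos hpos]
  exact posLog_div_le_posLog_div_of_min_le one_pos hpos
    ((min_le_min_left 1 (sub_le_infDist_slit n (t, y))).trans
      (min_one_infDist_slit_le (by dsimp; linarith [ht.1]) ht.2))

theorem le_osc1_slice (y : ℝ) (n : ℤ) :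
    (log⁺ (1 / |y - slitHeight n|) - 2) / 2 ≤
      osc1 (fun t => logInvDistSlits (t, y)) (Icc (3 * n) (3 * n + 2)) := by
  set f := fun t => logInvDistSlits (t, y)
  set c : ℝ := 3 * n + 1 with hc
  set A := Icc (3 * n : ℝ) c
  set B := Ioc c (3 * n + 2)
  have hAB : A ∪ B = Icc (3 * n : ℝ) (3 * n + 2) := Icc_union_Ioc_eq_Icc (by linarith) (by linarith)
  have hfA : EqOn f (fun _ => log⁺ (1 / |y - slitHeight n|)) A :=
    fun t ht => logInvDistSlits_eq_of_mem_Icc ht y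
  have hmaj := integrable_posLog_div_abs_sub c one_pos
  have hintA : IntegrableOn f A :=
    (integrableOn_const measure_Icc_lt_top.ne).congr_fun hfA.symm measurableSet_Icc
  have hintB : IntegrableOn f B := by
    refine hmaj.integrableOn.mono' ((measurable_posLog_div_infDist_slits 1).comp
      (measurable_id.prodMk measurable_const)).aestronglyMeasurable ?_
    filter_upwards [ae_restrict_mem measurableSet_Ioc] with t ht
    rw [Real.norm_eq_abs, abs_of_nonneg (show 0 ≤ f t from posLog_nonneg)]
    exact logInvDistSlits_le_of_mem_Ioc ht y
  have hIA : ∫ t in A, f t = log⁺ (1 / |y - slitHeight n|) := by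
    rw [setIntegral_congr_fun measurableSet_Icc hfA, setIntegral_const,
      Real.volume_real_Icc_of_le (by linarith), smul_eq_mul]
    ring
  have hIB : ∫ t in B, f t ≤ 2 :=
    calc ∫ t in B, f t ≤ ∫ t in B, log⁺ (1 / |t - c|) :=
          setIntegral_mono_on hintB hmaj.integrableOn measurableSet_Ioc
            fun t ht => logInvDistSlits_le_of_mem_Ioc ht y
      _ ≤ ∫ t, log⁺ (1 / |t - c|) :=
          setIntegral_le_integral hmaj (.of_forall fun _ => posLog_nonneg)
      _ = 2 := by rw [integral_posLog_div_abs_sub c one_pos, mul_one]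
  have hlower := setIntegral_sub_setIntegral_le_setIntegral_abs_sub (hAB ▸ subset_union_left)
    (hAB ▸ subset_union_right) (disjoint_left.mpr fun t htA htB => htB.1.not_ge htA.2)
    measurableSet_Ioc (by rw [Real.volume_Icc, Real.volume_Ioc, hc]; ring_nf) measure_Icc_lt_top.ne
    (hAB ▸ hintA.union hintB) (⨍ t in Icc (3 * n : ℝ) (3 * n + 2), f t)
  rw [osc1, setAverage_eq, Real.volume_real_Icc_of_le (by linarith), smul_eq_mul,
    show (3 * n + 2 - 3 * n : ℝ) = 2 by ring]
  linarith

theorem exists_lt_osc1_slice (y C : ℝ) :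
    ∃ a : ℝ, C < osc1 (fun t => logInvDistSlits (t, y)) (Icc a (a + 2)) := by
  obtain ⟨q, hyq, hq⟩ := exists_rat_btwn (lt_add_of_pos_right y (exp_pos (-(2 * C + 2))))
  obtain ⟨n, hn⟩ := exists_slitHeight_eq q
  refine ⟨3 * n, lt_of_lt_of_le ?_ (le_osc1_slice y n)⟩
  have he : 0 < q - y := sub_pos.mpr hyq
  have hlog : log (q - y) < -(2 * C + 2) := (log_lt_iff_lt_exp he).mpr (by linarith)
  have : -log (q - y) ≤ log⁺ (1 / |y - slitHeight n|) := by
    rw [hn, abs_sub_comm, abs_of_pos he, one_div, ← log_inv]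
    exact le_max_right _ _
  linarith

/-- there is a function `h ∈ BMO(ℝ²)` such that, for every `y`, the
mean oscillations of the horizontal slice `h(·, y)` over closed intervals of length `2`
are unbounded; in particular no horizontal slice of `h` belongs to `BMO(ℝ)`. -/
theorem exists_bmo_with_all_horizontal_slices_unbounded :
    ∃ h : ℝ × ℝ → ℝ,
      LocallyIntegrable h volume ∧
      bmo2 h ≠ ⊤ ∧
      (∀ y : ℝ, ∀ C : ℝ, ∃ a : ℝ, C < osc1 (fun t => h (t, y)) (Icc a (a + 2))) ∧
      (∀ y : ℝ, bmo1 (fun t => h (t, y)) = ⊤) :=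
  ⟨logInvDistSlits, locallyIntegrable_logInvDistSlits,
    bmo2_ne_top_of_osc2_le fun a b _ hl => osc2_logInvDistSlits_le a b hl,
    exists_lt_osc1_slice,
    fun y => bmo1_eq_top_of_forall_exists_lt fun C =>
      let ⟨a, ha⟩ := exists_lt_osc1_slice y C
      ⟨a, a + 2, by linarith, ha⟩⟩
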